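/- arXiv:2510.00474 — 2 statements merged into one kernel-verified Lean document; each statement's English description precedes it below -/
import Mathlib

section
/- Let (X,d) be a metric space, π : ℝ₊ × X → X a continuous dynamical system (π(0,x)=x, π(t+s,x)=π(t,π(s,x))), and let x ∈ X be positively Lagrange stable (the forward orbit {π(t,x) : t ≥ 0} is precompact). Fix τ > 0. Then the motion π(·,x) is remotely τ-periodic (i.e. d(π(t+τ,x), π(t,x)) → 0 as t → +∞) if and only if every point p of the ω-limit set of x is τ-periodic (π(τ,p) = p). -/
/-- For a positively Lagrange stable point x of a continuous one-sided dynamical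
system, the motion through x is remotely τ-periodic iff every point of its
ω-limit set is τ-periodic. -/
theorem stmt_15 {X : Type*} [MetricSpace X]
    (π : ℝ → X → X)
    (hcont : Continuous fun p : ℝ × X => π p.1 p.2)
    (hid : ∀ y : X, π 0 y = y)
    (hflow : ∀ t s : ℝ, 0 ≤ t → 0 ≤ s → ∀ y : X, π (t + s) y = π t (π s y))
    (x : X)
    (hLag : IsCompact (closure {y : X | ∃ t : ℝ, 0 ≤ t ∧ π t x = y}))
    (τ : ℝ) (hτ : 0 < τ) :
    Filter.Tendsto (fun t : ℝ => dist (π (t + τ) x) (π t x)) Filter.atTop (nhds 0) ↔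
      ∀ p : X,
        (∃ tk : ℕ → ℝ, Filter.Tendsto tk Filter.atTop Filter.atTop ∧
          Filter.Tendsto (fun k => π (tk k) x) Filter.atTop (nhds p)) →
        π τ p = p := by
  have hπτ : Continuous fun y : X => π τ y :=
    hcont.comp (continuous_const.prodMk continuous_id)
  constructor
  · rintro h p ⟨tk, htk, hconv⟩
    -- π τ (π (tk k) x) → π τ p
    have h1 : Filter.Tendsto (fun k => π τ (π (tk k) x)) Filter.atTop (nhds (π τ p)) :=
      (hπτ.continuousAt.tendsto).comp hconv
    -- eventually tk k ≥ 0
    have hev : ∀ᶠ k in Filter.atTop, π τ (π (tk k) x) = π (tk k + τ) x := by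
      filter_upwards [htk.eventually_ge_atTop 0] with k hk
      rw [add_comm, ← hflow τ (tk k) hτ.le hk]
    have h2 : Filter.Tendsto (fun k => π (tk k + τ) x) Filter.atTop (nhds (π τ p)) :=
      h1.congr' hev
    -- dist (π (tk k + τ) x) (π (tk k) x) → 0
    have h3 : Filter.Tendsto (fun k => dist (π (tk k + τ) x) (π (tk k) x))
        Filter.atTop (nhds 0) := h.comp htk
    have h4 : Filter.Tendsto (fun k => π (tk k) x) Filter.atTop (nhds (π τ p)) :=
      h2.congr_dist h3
    exact tendsto_nhds_unique h4 hconv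
  · intro hper
    by_contra hnot
    rw [Metric.tendsto_atTop] at hnot
    push_neg at hnot
    obtain ⟨ε, hε, hseq⟩ := hnot
    -- choose t k ≥ k with dist ≥ ε
    have hchoice : ∀ k : ℕ, ∃ t : ℝ, (k : ℝ) ≤ t ∧
        ε ≤ dist (π (t + τ) x) (π t x) := by
      intro k
      obtain ⟨t, ht, hd⟩ := hseq (k : ℝ)
      refine ⟨t, ht, ?_⟩
      rwa [Real.dist_eq, sub_zero, abs_of_nonneg dist_nonneg] at hd
    choose t ht hd using hchoice
    have htnn : ∀ k, (0 : ℝ) ≤ t k := fun k => le_trans (by positivity) (ht k)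
    have hmem : ∀ k, π (t k) x ∈ closure {y : X | ∃ s : ℝ, 0 ≤ s ∧ π s x = y} :=
      fun k => subset_closure ⟨t k, htnn k, rfl⟩
    obtain ⟨p, _, φ, hφ, hconv⟩ := hLag.tendsto_subseq hmem
    have htφ : Filter.Tendsto (fun k => t (φ k)) Filter.atTop Filter.atTop := by
      apply Filter.tendsto_atTop_mono (fun k => le_trans ?_ (ht (φ k)))
        tendsto_natCast_atTop_atTop
      exact_mod_cast hφ.id_le k
    have hp : π τ p = p := hper p ⟨fun k => t (φ k), htφ, hconv⟩
    have h1 : Filter.Tendsto (fun k => π τ (π (t (φ k)) x)) Filter.atTop (nhds p) := by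
      have := (hπτ.continuousAt.tendsto).comp hconv
      rwa [hp] at this
    have h2 : Filter.Tendsto (fun k => π (t (φ k) + τ) x) Filter.atTop (nhds p) := by
      refine h1.congr fun k => ?_
      rw [add_comm, ← hflow τ (t (φ k)) hτ.le (htnn (φ k))]
    have h3 : Filter.Tendsto (fun k => dist (π (t (φ k) + τ) x) (π (t (φ k)) x))
        Filter.atTop (nhds 0) := by
      have := h2.dist hconv
      simpa using this
    have : ε ≤ 0 := ge_of_tendsto h3 (Filter.Eventually.of_forall fun k => hd (φ k))
    linarith
end

section
/- Let (X,d) be a metric space, π a continuous one-sided dynamical system on X, and x ∈ X positively Lagrange stable. Then the motion π(·,x) is remotely stationary (remotely τ-periodic for every τ > 0) if and only if every point of the ω-limit set ω_x is a fixed point of the flow. -/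
/-- For a positively Lagrange stable point x, the motion through x is remotely
stationary (remotely τ-periodic for every τ > 0) iff every point of its
ω-limit set is a fixed point of the flow. -/
theorem stmt_16 {X : Type*} [MetricSpace X]
    (π : ℝ → X → X)
    (hcont : Continuous fun p : ℝ × X => π p.1 p.2)
    (hid : ∀ y : X, π 0 y = y)
    (hflow : ∀ t s : ℝ, 0 ≤ t → 0 ≤ s → ∀ y : X, π (t + s) y = π t (π s y))
    (x : X)
    (hLag : IsCompact (closure {y : X | ∃ t : ℝ, 0 ≤ t ∧ π t x = y})) :
    (∀ τ : ℝ, 0 < τ →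
      Filter.Tendsto (fun t : ℝ => dist (π (t + τ) x) (π t x)) Filter.atTop (nhds 0)) ↔
      ∀ p : X,
        (∃ tk : ℕ → ℝ, Filter.Tendsto tk Filter.atTop Filter.atTop ∧
          Filter.Tendsto (fun k => π (tk k) x) Filter.atTop (nhds p)) →
        ∀ t : ℝ, 0 ≤ t → π t p = p := by
  constructor
  · intro hP p hp t ht
    obtain ⟨tk, htk, hconv⟩ := hp
    rcases eq_or_lt_of_le ht with h0 | ht
    · rw [← h0, hid]
    · have hnn : ∀ᶠ k in Filter.atTop, (0 : ℝ) ≤ tk k := htk.eventually_ge_atTop 0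
      have hc : Continuous fun y : X => π t y :=
        hcont.comp (continuous_const.prodMk continuous_id)
      have hA : Filter.Tendsto (fun k => π (tk k + t) x) Filter.atTop (nhds (π t p)) := by
        have h1 : Filter.Tendsto (fun k => π t (π (tk k) x)) Filter.atTop (nhds (π t p)) :=
          (hc.tendsto p).comp hconv
        refine h1.congr' ?_
        filter_upwards [hnn] with k hk
        rw [← hflow t (tk k) ht.le hk x, add_comm]
      have hB : Filter.Tendsto (fun k => dist (π (tk k + t) x) (π (tk k) x))
          Filter.atTop (nhds 0) := (hP t ht).comp htk
      have hconv' : Filter.Tendsto (fun k => dist (π (tk k) x) p) Filter.atTop (nhds 0) :=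
        tendsto_iff_dist_tendsto_zero.mp hconv
      have hA' : Filter.Tendsto (fun k => π (tk k + t) x) Filter.atTop (nhds p) := by
        rw [tendsto_iff_dist_tendsto_zero]
        refine squeeze_zero (fun k => dist_nonneg) (fun k => dist_triangle _ (π (tk k) x) _) ?_
        simpa using hB.add hconv'
      exact tendsto_nhds_unique hA hA'
  · intro hfix τ hτ
    by_contra hno
    rw [Metric.tendsto_atTop] at hno
    push_neg at hno
    obtain ⟨ε, hε, hfreq⟩ := hno
    have hsel : ∀ n : ℕ, ∃ t : ℝ, (n : ℝ) ≤ t ∧ ε ≤ dist (π (t + τ) x) (π t x) := by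
      intro n
      obtain ⟨t, hts, hd⟩ := hfreq (n : ℝ)
      refine ⟨t, hts, ?_⟩
      rwa [Real.dist_eq, sub_zero, abs_of_nonneg dist_nonneg] at hd
    choose u hu1 hu2 using hsel
    have hupos : ∀ n : ℕ, (0 : ℝ) ≤ u n := fun n => le_trans (Nat.cast_nonneg n) (hu1 n)
    have huT : Filter.Tendsto u Filter.atTop Filter.atTop :=
      Filter.tendsto_atTop_mono hu1 tendsto_natCast_atTop_atTop
    have hmem : ∀ n, π (u n) x ∈ closure {y : X | ∃ t : ℝ, 0 ≤ t ∧ π t x = y} := by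
      intro n
      exact subset_closure ⟨u n, hupos n, rfl⟩
    obtain ⟨p, _, φ, hφ, hconv⟩ := hLag.tendsto_subseq hmem
    have hconv2 : Filter.Tendsto (fun k => π (u (φ k)) x) Filter.atTop (nhds p) := hconv
    have htkT : Filter.Tendsto (fun k => u (φ k)) Filter.atTop Filter.atTop :=
      huT.comp hφ.tendsto_atTop
    have hfp : π τ p = p := hfix p ⟨fun k => u (φ k), htkT, hconv2⟩ τ hτ.le
    have hc : Continuous fun y : X => π τ y :=
      hcont.comp (continuous_const.prodMk continuous_id)
    have hA : Filter.Tendsto (fun k => π (u (φ k) + τ) x) Filter.atTop (nhds p) := by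
      have h1 : Filter.Tendsto (fun k => π τ (π (u (φ k)) x)) Filter.atTop (nhds (π τ p)) :=
        (hc.tendsto p).comp hconv2
      rw [hfp] at h1
      refine h1.congr fun k => ?_
      rw [← hflow τ (u (φ k)) hτ.le (hupos _) x, add_comm]
    have hd0 : Filter.Tendsto (fun k => dist (π (u (φ k) + τ) x) (π (u (φ k)) x))
        Filter.atTop (nhds 0) := by
      refine squeeze_zero (fun k => dist_nonneg) (fun k => dist_triangle_right _ _ p) ?_
      simpa using (tendsto_iff_dist_tendsto_zero.mp hA).add
        (tendsto_iff_dist_tendsto_zero.mp hconv2)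
    have : ε ≤ 0 := ge_of_tendsto' hd0 fun k => hu2 (φ k)
    linarith
end
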